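/- Let β ∈ (0,1), v₀ > 0, and let g₁,...,g_k be real numbers. Define recursively v_t = β·v_{t-1} + (1-β)·g_t². Then (1-β)·∑_{t=1}^k g_t²/v_t ≤ ln(v_k/(β^k·v₀)). -/

import Mathlib

/-! Each step satisfies `(1 - β) g_t² / v_t = 1 - β v_{t-1} / v_t ≤ log (v_t / (β v_{t-1}))`
by `1 - x⁻¹ ≤ log x`, and the right-hand sides telescope to `log (v_k / (β^k v₀))`. -/

open Finset Real

lemma sub_div_le_log_sub_log {a b : ℝ} (ha : 0 < a) (hb : 0 < b) :
    (b - a) / b ≤ log b - log a := by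
  have h := one_sub_inv_le_log_of_pos (div_pos hb ha)
  rwa [inv_div, one_sub_div hb.ne', log_div hb.ne' ha.ne'] at h

lemma sum_Icc_one_sub_pred {M : Type*} [AddCommGroup M] (f : ℕ → M) (k : ℕ) :
    ∑ t ∈ Icc 1 k, (f t - f (t - 1)) = f k - f 0 := by
  induction k with
  | zero => simp
  | succ k ih =>
    rw [sum_Icc_succ_top (by omega), ih, Nat.add_sub_cancel]
    abel

lemma ema_pos {β : ℝ} {g v : ℕ → ℝ} (hβ0 : 0 < β) (hβ1 : β ≤ 1) (hv0 : 0 < v 0)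
    (hrec : ∀ t : ℕ, 1 ≤ t → v t = β * v (t - 1) + (1 - β) * g t ^ 2) (t : ℕ) : 0 < v t := by
  induction t with
  | zero => exact hv0
  | succ t ih =>
    rw [hrec (t + 1) (by omega), Nat.add_sub_cancel]
    have : 0 ≤ 1 - β := by linarith
    positivity

theorem rmsprop_log_potential (β v₀ : ℝ) (hβ : β ∈ Set.Ioo (0:ℝ) 1) (hv0 : v₀ > 0)
    (g v : ℕ → ℝ) (hv₀ : v 0 = v₀)
    (hrec : ∀ t : ℕ, 1 ≤ t → v t = β * v (t - 1) + (1 - β) * (g t) ^ 2)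
    (k : ℕ) :
    (1 - β) * ∑ t ∈ Finset.Icc 1 k, (g t) ^ 2 / v t ≤ Real.log (v k / (β ^ k * v₀)) := by
  obtain ⟨hβ0, hβ1⟩ := hβ
  have hpos := ema_pos hβ0 hβ1.le (hv₀ ▸ hv0) hrec
  calc (1 - β) * ∑ t ∈ Icc 1 k, g t ^ 2 / v t
      = ∑ t ∈ Icc 1 k, (v t - β * v (t - 1)) / v t := by
        rw [mul_sum]
        refine sum_congr rfl fun t ht => ?_
        rw [hrec t (mem_Icc.1 ht).1, add_sub_cancel_left, mul_div_assoc]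
    _ ≤ ∑ t ∈ Icc 1 k, (log (v t) - log (β * v (t - 1))) :=
        sum_le_sum fun t _ => sub_div_le_log_sub_log (mul_pos hβ0 (hpos _)) (hpos t)
    _ = ∑ t ∈ Icc 1 k, ((log (v t) - log (v (t - 1))) - log β) := by
        refine sum_congr rfl fun t _ => ?_
        rw [log_mul hβ0.ne' (hpos _).ne']
        ring
    _ = log (v k / (β ^ k * v₀)) := by
        rw [sum_sub_distrib, sum_Icc_one_sub_pred (fun t => log (v t)), sum_const,
          Nat.card_Icc, log_div (hpos k).ne' (by positivity), log_mul (by positivity) hv0.ne',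
          log_pow, hv₀, nsmul_eq_mul]
        simp only [Nat.add_sub_cancel]
        ring
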